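/- Let T be a rigid essentially small monoidal triangulated category (every object is left or right dualisable) whose spectrum Spc(T) is noetherian. Then the assignment Y ↦ T_Y = {t ∈ T : supp(t) ⊆ Y} is an inclusion-preserving bijection from the collection of all Thomason subsets of Spc(T) to the collection of ALL thick two-sided tensor ideals of T, with inverse J ↦ supp(J). -/

import Mathlib

open CategoryTheory CategoryTheory.Limits CategoryTheory.Pretriangulated
  CategoryTheory.MonoidalCategory TopologicalSpace ZeroObject

universe v u

variable (C : Type u) [Category.{v} C] [HasZeroObject C] [Preadditive C]
  [HasShift C ℤ] [∀ n : ℤ, (shiftFunctor C n).Additive] [Pretriangulated C]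
  [HasBinaryBiproducts C] [MonoidalCategory C] [EssentiallySmall.{v} C]
  [∀ X : C, (tensorLeft X).CommShift ℤ] [∀ X : C, (tensorRight X).CommShift ℤ]
  [∀ X : C, (tensorLeft X).IsTriangulated] [∀ X : C, (tensorRight X).IsTriangulated]

/-- A thick two-sided tensor ideal of a monoidal triangulated category:
a thick (triangulated, closed under direct summands) subcategory, closed under
left and right tensoring by arbitrary objects. -/
structure ThickIdeal : Type (max u v) where
  carrier : Set C
  zero_mem : (0 : C) ∈ carrier
  iso_closed : ∀ {a b : C}, (a ≅ b) → a ∈ carrier → b ∈ carrier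
  shift_mem : ∀ (a : C) (n : ℤ), a ∈ carrier → (a⟦n⟧ : C) ∈ carrier
  ext₂ : ∀ T : Triangle C, (T ∈ distTriang C) →
    T.obj₁ ∈ carrier → T.obj₃ ∈ carrier → T.obj₂ ∈ carrier
  summand_mem : ∀ a b : C, (a ⊞ b) ∈ carrier → a ∈ carrier
  tensor_left_mem : ∀ a x : C, a ∈ carrier → (x ⊗ a) ∈ carrier
  tensor_right_mem : ∀ a x : C, a ∈ carrier → (a ⊗ x) ∈ carrier

namespace ThickIdeal

variable {C}

/-- A thick two-sided ideal is proper if it is not all of `C`. -/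
def IsProper (P : ThickIdeal C) : Prop := P.carrier ≠ Set.univ

/-- A prime ideal: a proper thick two-sided ideal `P` such that `I ⊗ J ⊆ P`
implies `I ⊆ P` or `J ⊆ P` for all thick two-sided ideals `I`, `J`.
(Since `P` is a thick two-sided ideal, `I ⊗ J ⊆ P` is equivalent to all
elementwise tensor products lying in `P`.) -/
def IsPrime (P : ThickIdeal C) : Prop :=
  P.IsProper ∧ ∀ I J : ThickIdeal C,
    (∀ i ∈ I.carrier, ∀ j ∈ J.carrier, (i ⊗ j) ∈ P.carrier) →
      I.carrier ⊆ P.carrier ∨ J.carrier ⊆ P.carrier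

/-- A semiprime ideal: an intersection of prime ideals. -/
def IsSemiprime (J : ThickIdeal C) : Prop :=
  ∃ S : Set (ThickIdeal C), (∀ P ∈ S, P.IsPrime) ∧
    J.carrier = ⋂ P ∈ S, P.carrier

end ThickIdeal

/-- The noncommutative Balmer spectrum: the set of prime thick two-sided ideals. -/
def Spc : Type (max u v) := {P : ThickIdeal C // P.IsPrime}

/-- The topology on `Spc C` generated by declaring the sets
`V(S) = {P : P ∩ S = ∅}` to be closed, i.e. their complements
`U(S) = {P : P ∩ S ≠ ∅}` to be open. -/
instance : TopologicalSpace (Spc C) :=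
  generateFrom
    {U : Set (Spc C) | ∃ S : Set C, U = {P : Spc C | (P.1.carrier ∩ S).Nonempty}}

/-- The small noncommutative support of an object. -/
def supp (t : C) : Set (Spc C) := {P : Spc C | t ∉ P.1.carrier}

/-- The support of a collection of objects. -/
def suppSet (E : Set C) : Set (Spc C) := ⋃ t ∈ E, supp C t

/-- A Thomason subset: a union of closed subsets with quasi-compact complements. -/
def IsThomason (Y : Set (Spc C)) : Prop :=
  ∃ 𝒴 : Set (Set (Spc C)), Y = ⋃₀ 𝒴 ∧ ∀ Z ∈ 𝒴, IsClosed Z ∧ IsCompact Zᶜ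

/-- A support datum on `C` with values in the topological space `X`. -/
structure SupportDatum (X : Type*) [TopologicalSpace X] where
  σ : C → Set X
  isClosed_σ : ∀ t : C, IsClosed (σ t)
  σ_zero : σ 0 = ∅
  σ_unit : σ (𝟙_ C) = Set.univ
  σ_sum : ∀ a b : C, σ (a ⊞ b) = σ a ∪ σ b
  σ_shift : ∀ a : C, σ (a⟦(1 : ℤ)⟧) = σ a
  σ_triangle : ∀ T : Triangle C, (T ∈ distTriang C) →
    σ T.obj₁ ⊆ σ T.obj₂ ∪ σ T.obj₃
  σ_tensor : ∀ a b : C, (⋃ c : C, σ (a ⊗ c ⊗ b)) = σ a ∩ σ b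

/-- A specialisation closed subset: a union of closed subsets. -/
def IsSpecClosed {X : Type*} [TopologicalSpace X] (Y : Set X) : Prop :=
  ∃ 𝒴 : Set (Set X), Y = ⋃₀ 𝒴 ∧ ∀ Z ∈ 𝒴, IsClosed Z

/-- A classifying support datum: the space `X` is noetherian and spectral, and
`Θ(Y) = {t : σ(t) ⊆ Y}` is a bijection from specialisation closed subsets of `X`
to thick two-sided semiprime ideals of `C`, with inverse `J ↦ ⋃_{j ∈ J} σ(j)`. -/
structure ClassifyingSupportDatum (X : Type*) [TopologicalSpace X]
    extends SupportDatum C X where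
  noetherian : NoetherianSpace X
  compact : CompactSpace X
  t0 : T0Space X
  basis : IsTopologicalBasis {U : Set X | IsOpen U ∧ IsCompact U}
  qc_inter : ∀ U V : Set X, IsOpen U → IsCompact U → IsOpen V → IsCompact V →
    IsCompact (U ∩ V)
  sober : QuasiSober X
  theta_semiprime : ∀ Y : Set X, IsSpecClosed Y →
    ∃ J : ThickIdeal C, J.IsSemiprime ∧ J.carrier = {t : C | σ t ⊆ Y}
  theta_leftInv : ∀ Y : Set X, IsSpecClosed Y →
    (⋃ t ∈ {t : C | σ t ⊆ Y}, σ t) = Y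
  sigma_specClosed : ∀ J : ThickIdeal C, J.IsSemiprime →
    IsSpecClosed (⋃ j ∈ J.carrier, σ j)
  theta_rightInv : ∀ J : ThickIdeal C, J.IsSemiprime →
    {t : C | σ t ⊆ ⋃ j ∈ J.carrier, σ j} = J.carrier

/-- The alternating tensor product `r 0 ⊗ c 0 ⊗ r 1 ⊗ c 1 ⊗ ⋯ ⊗ c (n-1) ⊗ r n`. -/
def altTensor : ∀ (n : ℕ), (Fin (n + 1) → C) → (Fin n → C) → C
  | 0, r, _ => r 0
  | n + 1, r, c =>
      altTensor n (fun i => r i.castSucc) (fun i => c i.castSucc) ⊗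
        (c (Fin.last n) ⊗ r (Fin.last (n + 1)))

/-! Rigidity makes every object `a` a retract of `a ⊗ (a' ⊗ a)` for a dual `a'`, so a thick ideal
`J` contains every `a` with `a ⊗ (c ⊗ a) ∈ J` for all `c`. Starting from `t ∉ J` this yields a
sequence `t, t ⊗ (c₀ ⊗ t), …` avoiding `J`, and an ideal maximal among those containing `J` and
avoiding the sequence is prime. Hence `J` is the intersection of the primes containing it, which is
`T_{supp J}`.

Conversely, the sets `{P : t ∈ P}` form a basis of `Spc C`, so a closed `Z` with quasi-compact
complement is cut out by finitely many objects `t₁, …, tₙ`. For a prime `Q ∈ Z` primality yields a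
product `t₁ ⊗ (c₁ ⊗ (t₂ ⊗ ⋯ tₙ))` outside `Q`, whose support lies in `Z`; so every Thomason `Y`
equals `supp T_Y`. Noetherianity makes every `supp J` Thomason. -/

set_option linter.unusedSectionVars false

namespace ThickIdeal

variable {C}

lemma carrier_injective : Function.Injective (ThickIdeal.carrier (C := C)) := by
  rintro ⟨⟩ ⟨⟩ h
  congr

instance : PartialOrder (ThickIdeal C) := PartialOrder.lift carrier carrier_injective

lemma mem_of_retract (P : ThickIdeal C) {a m : C} (h : Retract a m) (hm : m ∈ P.carrier) :
    a ∈ P.carrier := by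
  obtain ⟨c, p, δ, hT⟩ := distinguished_cocone_triangle h.i
  have hδ : δ = 0 := Triangle.mor₃_eq_zero_of_mono₁ _ hT (inferInstanceAs (Mono h.i))
  obtain ⟨e, -, -⟩ := exists_iso_binaryBiproduct_of_distTriang _ hT hδ
  exact P.summand_mem a c (P.iso_closed e hm)

lemma biprod_mem_iff (P : ThickIdeal C) (a b : C) :
    (a ⊞ b) ∈ P.carrier ↔ a ∈ P.carrier ∧ b ∈ P.carrier :=
  ⟨fun h => ⟨P.summand_mem a b h, P.summand_mem b a (P.iso_closed (biprod.braiding a b) h)⟩,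
    fun h => P.ext₂ _ (binaryBiproductTriangle_distinguished a b) h.1 h.2⟩

lemma one_not_mem {P : ThickIdeal C} (hP : P.IsProper) : 𝟙_ C ∉ P.carrier := fun h =>
  hP <| Set.eq_univ_of_forall fun x => P.iso_closed (ρ_ x) (P.tensor_left_mem _ x h)

section Exact

variable (P : ThickIdeal C) (F : C ⥤ C) [F.CommShift ℤ] [F.IsTriangulated]

lemma obj_zero_mem : F.obj 0 ∈ P.carrier :=
  P.iso_closed F.mapZeroObject.symm P.zero_mem

lemma obj_shift_mem (x : C) (n : ℤ) (h : F.obj x ∈ P.carrier) : F.obj (x⟦n⟧) ∈ P.carrier :=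
  P.iso_closed ((F.commShiftIso n).symm.app x) (P.shift_mem _ n h)

lemma obj_ext₂ (T : Triangle C) (hT : T ∈ distTriang C) (h₁ : F.obj T.obj₁ ∈ P.carrier)
    (h₃ : F.obj T.obj₃ ∈ P.carrier) : F.obj T.obj₂ ∈ P.carrier :=
  P.ext₂ (F.mapTriangle.obj T) (F.map_distinguished T hT) h₁ h₃

lemma obj_summand_mem (a b : C) (h : F.obj (a ⊞ b) ∈ P.carrier) : F.obj a ∈ P.carrier :=
  P.mem_of_retract (Retract.map ⟨biprod.inl, biprod.fst, by simp⟩ F) h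

end Exact

def span (s : Set C) : ThickIdeal C where
  carrier := {x | ∀ I : ThickIdeal C, s ⊆ I.carrier → x ∈ I.carrier}
  zero_mem I _ := I.zero_mem
  iso_closed e h I hI := I.iso_closed e (h I hI)
  shift_mem a n h I hI := I.shift_mem a n (h I hI)
  ext₂ T hT h₁ h₃ I hI := I.ext₂ T hT (h₁ I hI) (h₃ I hI)
  summand_mem a b h I hI := I.summand_mem a b (h I hI)
  tensor_left_mem a x h I hI := I.tensor_left_mem a x (h I hI)
  tensor_right_mem a x h I hI := I.tensor_right_mem a x (h I hI)

lemma subset_span (s : Set C) : s ⊆ (span s).carrier :=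
  fun _ hx _ hI => hI hx

lemma span_le {s : Set C} {I : ThickIdeal C} (h : s ⊆ I.carrier) : span s ≤ I :=
  fun _ hx => hx I h

def lKer (t : C) (P : ThickIdeal C) : ThickIdeal C where
  carrier := {j | ∀ c : C, t ⊗ (c ⊗ j) ∈ P.carrier}
  zero_mem c := P.obj_zero_mem (tensorLeft c ⋙ tensorLeft t)
  iso_closed e h c := P.iso_closed ((tensorLeft c ⋙ tensorLeft t).mapIso e) (h c)
  shift_mem a n h c := P.obj_shift_mem (tensorLeft c ⋙ tensorLeft t) a n (h c)
  ext₂ T hT h₁ h₃ c := P.obj_ext₂ (tensorLeft c ⋙ tensorLeft t) T hT (h₁ c) (h₃ c)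
  summand_mem a b h c := P.obj_summand_mem (tensorLeft c ⋙ tensorLeft t) a b (h c)
  tensor_left_mem a x h c := P.iso_closed ((tensorLeft t).mapIso (α_ c x a)) (h (c ⊗ x))
  tensor_right_mem a x h c :=
    P.iso_closed (α_ t (c ⊗ a) x ≪≫ (tensorLeft t).mapIso (α_ c a x))
      (P.tensor_right_mem _ x (h c))

def lAnn (S P : ThickIdeal C) : ThickIdeal C where
  carrier := {i | ∀ j ∈ S.carrier, i ⊗ j ∈ P.carrier}
  zero_mem j _ := P.obj_zero_mem (tensorRight j)
  iso_closed e h j hj := P.iso_closed ((tensorRight j).mapIso e) (h j hj)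
  shift_mem a n h j hj := P.obj_shift_mem (tensorRight j) a n (h j hj)
  ext₂ T hT h₁ h₃ j hj := P.obj_ext₂ (tensorRight j) T hT (h₁ j hj) (h₃ j hj)
  summand_mem a b h j hj := P.obj_summand_mem (tensorRight j) a b (h j hj)
  tensor_left_mem a x h j hj := P.iso_closed (α_ x a j).symm (P.tensor_left_mem _ x (h j hj))
  tensor_right_mem a x h j hj := P.iso_closed (α_ a x j).symm (h (x ⊗ j) (S.tensor_left_mem j x hj))

lemma tensor_mem_of_mem_span_insert (P : ThickIdeal C) {a b : C}
    (h : ∀ c : C, a ⊗ (c ⊗ b) ∈ P.carrier) {i j : C} (hi : i ∈ (span (insert a P.carrier)).carrier)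
    (hj : j ∈ (span (insert b P.carrier)).carrier) : i ⊗ j ∈ P.carrier := by
  have hb : span (insert b P.carrier) ≤ lKer a P := span_le <| Set.insert_subset h
    fun x hx c => P.tensor_left_mem _ a (P.tensor_left_mem x c hx)
  have ha : span (insert a P.carrier) ≤ lAnn (span (insert b P.carrier)) P := span_le <|
    Set.insert_subset (fun j hj => P.iso_closed ((tensorLeft a).mapIso (λ_ j)) (hb hj (𝟙_ C)))
      fun x hx j _ => P.tensor_right_mem x j hx
  exact ha hi j hj

lemma isPrime_iff (P : ThickIdeal C) : P.IsPrime ↔ P.IsProper ∧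
    ∀ a b : C, a ∉ P.carrier → b ∉ P.carrier → ∃ c : C, a ⊗ (c ⊗ b) ∉ P.carrier := by
  refine and_congr_right fun _ => ⟨fun hP a b ha hb => ?_, fun hP I J hIJ => ?_⟩
  · by_contra! h
    rcases hP _ _ fun i hi j hj => P.tensor_mem_of_mem_span_insert h hi hj with hsub | hsub
    · exact ha (hsub (subset_span _ (Set.mem_insert _ _)))
    · exact hb (hsub (subset_span _ (Set.mem_insert _ _)))
  · by_contra! h
    obtain ⟨⟨a, haI, haP⟩, ⟨b, hbJ, hbP⟩⟩ := And.imp Set.not_subset.1 Set.not_subset.1 h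
    obtain ⟨c, hc⟩ := hP a b haP hbP
    exact hc (hIJ a haI _ (J.tensor_left_mem b c hbJ))

def chainSup (c : Set (ThickIdeal C)) (hc : IsChain (· ≤ ·) c) (hne : c.Nonempty) :
    ThickIdeal C where
  carrier := {a | ∃ I ∈ c, a ∈ I.carrier}
  zero_mem := let ⟨I, hI⟩ := hne; ⟨I, hI, I.zero_mem⟩
  iso_closed e := fun ⟨I, hI, ha⟩ => ⟨I, hI, I.iso_closed e ha⟩
  shift_mem a n := fun ⟨I, hI, ha⟩ => ⟨I, hI, I.shift_mem a n ha⟩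
  ext₂ T hT := fun ⟨I₁, hI₁, h₁⟩ ⟨I₃, hI₃, h₃⟩ =>
    let ⟨I, hI, h₁I, h₃I⟩ := hc.directedOn I₁ hI₁ I₃ hI₃
    ⟨I, hI, I.ext₂ T hT (h₁I h₁) (h₃I h₃)⟩
  summand_mem a b := fun ⟨I, hI, h⟩ => ⟨I, hI, I.summand_mem a b h⟩
  tensor_left_mem a x := fun ⟨I, hI, ha⟩ => ⟨I, hI, I.tensor_left_mem a x ha⟩
  tensor_right_mem a x := fun ⟨I, hI, ha⟩ => ⟨I, hI, I.tensor_right_mem a x ha⟩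

-- Zorn yields `P ≥ J` maximal among the ideals avoiding `m`; it is prime because `m` is stable
-- under `x ↦ x ⊗ (c ⊗ x)` for some `c`, so any two ideals meeting `m` meet it in a common term.
lemma exists_isPrime_of_forall_not_mem (J : ThickIdeal C) (m : ℕ → C)
    (hm : ∀ k, ∃ c : C, m (k + 1) = m k ⊗ (c ⊗ m k)) (hJ : ∀ k, m k ∉ J.carrier) :
    ∃ P : ThickIdeal C, P.IsPrime ∧ J ≤ P ∧ ∀ k, m k ∉ P.carrier := by
  have mono (I : ThickIdeal C) {i j : ℕ} (hij : i ≤ j) (hi : m i ∈ I.carrier) :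
      m j ∈ I.carrier := by
    induction hij with
    | refl => exact hi
    | step _ ih =>
      obtain ⟨c, hc⟩ := hm _
      exact hc ▸ I.tensor_right_mem _ _ ih
  obtain ⟨P, hJP, hP⟩ := zorn_le_nonempty₀ {I : ThickIdeal C | ∀ k, m k ∉ I.carrier}
    (fun c hcS hc I hI => ⟨chainSup c hc ⟨I, hI⟩, fun k ⟨I, hI, hk⟩ => hcS hI k hk,
      fun I hI _ hx => ⟨I, hI, hx⟩⟩) J hJ
  refine ⟨P, P.isPrime_iff.2 ⟨fun h => hP.prop 0 (h ▸ trivial), fun a b ha hb => ?_⟩, hJP, hP.prop⟩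
  by_contra! h
  have meets (x : C) (hx : x ∉ P.carrier) : ∃ k, m k ∈ (span (insert x P.carrier)).carrier := by
    by_contra! hk
    exact hx (hP.2 hk ((Set.subset_insert x _).trans (subset_span _))
      (subset_span _ (Set.mem_insert _ _)))
  obtain ⟨k, hk⟩ := meets a ha
  obtain ⟨l, hl⟩ := meets b hb
  obtain ⟨c, hc⟩ := hm (max k l)
  refine hP.prop (max k l + 1) (hc ▸ P.tensor_mem_of_mem_span_insert h ?_ ?_)
  · exact mono _ (le_max_left k l) hk
  · exact tensor_left_mem _ _ c (mono _ (le_max_right k l) hl)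

def retractTensorLeftDual (a : C) [HasLeftDual a] : Retract a (a ⊗ ((ᘁa) ⊗ a)) where
  i := (ρ_ a).inv ≫ a ◁ η_ (ᘁa) a
  r := (α_ a (ᘁa) a).inv ≫ ε_ (ᘁa) a ▷ a ≫ (λ_ a).hom
  retract := by
    slice_lhs 2 4 => rw [ExactPairing.coevaluation_evaluation]
    simp

def retractTensorRightDual (a : C) [HasRightDual a] : Retract a (a ⊗ ((aᘁ) ⊗ a)) where
  i := (λ_ a).inv ≫ η_ a (aᘁ) ▷ a ≫ (α_ a (aᘁ) a).hom
  r := a ◁ ε_ a (aᘁ) ≫ (ρ_ a).hom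
  retract := by
    slice_lhs 2 4 => rw [ExactPairing.evaluation_coevaluation]
    simp

lemma mem_of_forall_tensor_tensor_self_mem
    (rigid : ∀ X : C, Nonempty (HasLeftDual X) ∨ Nonempty (HasRightDual X))
    (J : ThickIdeal C) {a : C} (h : ∀ c : C, a ⊗ (c ⊗ a) ∈ J.carrier) : a ∈ J.carrier := by
  rcases rigid a with ⟨⟨_⟩⟩ | ⟨⟨_⟩⟩
  · exact J.mem_of_retract (retractTensorLeftDual a) (h _)
  · exact J.mem_of_retract (retractTensorRightDual a) (h _)

lemma exists_isPrime_not_mem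
    (rigid : ∀ X : C, Nonempty (HasLeftDual X) ∨ Nonempty (HasRightDual X))
    (J : ThickIdeal C) {t : C} (ht : t ∉ J.carrier) :
    ∃ P : ThickIdeal C, P.IsPrime ∧ J ≤ P ∧ t ∉ P.carrier := by
  have step (x : {x : C // x ∉ J.carrier}) : ∃ c : C, x.1 ⊗ (c ⊗ x.1) ∉ J.carrier := by
    by_contra! h
    exact x.2 (J.mem_of_forall_tensor_tensor_self_mem rigid h)
  choose c hc using step
  let m (k : ℕ) : {x : C // x ∉ J.carrier} := (fun x => ⟨_, hc x⟩)^[k] ⟨t, ht⟩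
  obtain ⟨P, hP, hJP, hmP⟩ := J.exists_isPrime_of_forall_not_mem (fun k => (m k).1)
    (fun k => ⟨c (m k), by simp only [m, Function.iterate_succ_apply']⟩) (fun k => (m k).2)
  exact ⟨P, hP, hJP, hmP 0⟩

end ThickIdeal

section Spectrum

variable {C}

@[simp]
lemma mem_compl_supp {t : C} {P : Spc C} : P ∈ (supp C t)ᶜ ↔ t ∈ P.1.carrier :=
  not_not

lemma isOpen_compl_supp (t : C) : IsOpen (supp C t)ᶜ :=
  isOpen_generateFrom_of_mem ⟨{t}, by ext; simp [supp]⟩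

lemma isClosed_supp (t : C) : IsClosed (supp C t) :=
  isOpen_compl_iff.1 (isOpen_compl_supp t)

lemma supp_tensor_subset_left (a b : C) : supp C (a ⊗ b) ⊆ supp C a :=
  fun P hP ha => hP (P.1.tensor_right_mem a b ha)

lemma supp_tensor_subset_right (a b : C) : supp C (a ⊗ b) ⊆ supp C b :=
  fun P hP hb => hP (P.1.tensor_left_mem b a hb)

lemma exists_mem_compl_supp_subset {W : Set (Spc C)} (hW : IsOpen W) {Q : Spc C} (hQ : Q ∈ W) :
    ∃ t ∈ Q.1.carrier, (supp C t)ᶜ ⊆ W := by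
  induction hW generalizing Q with
  | basic W hW =>
    obtain ⟨S, rfl⟩ := hW
    obtain ⟨t, htQ, htS⟩ := hQ
    exact ⟨t, htQ, fun P hP => ⟨t, mem_compl_supp.1 hP, htS⟩⟩
  | univ => exact ⟨0, Q.1.zero_mem, Set.subset_univ _⟩
  | inter W₁ W₂ _ _ ih₁ ih₂ =>
    obtain ⟨t₁, ht₁, h₁⟩ := ih₁ hQ.1
    obtain ⟨t₂, ht₂, h₂⟩ := ih₂ hQ.2
    refine ⟨t₁ ⊞ t₂, (Q.1.biprod_mem_iff t₁ t₂).2 ⟨ht₁, ht₂⟩, fun P hP => ?_⟩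
    have h := (P.1.biprod_mem_iff t₁ t₂).1 (mem_compl_supp.1 hP)
    exact ⟨h₁ (mem_compl_supp.2 h.1), h₂ (mem_compl_supp.2 h.2)⟩
  | sUnion K _ ih =>
    obtain ⟨W, hWK, hQW⟩ := hQ
    obtain ⟨t, htQ, ht⟩ := ih W hWK hQW
    exact ⟨t, htQ, ht.trans (Set.subset_sUnion_of_mem hWK)⟩

lemma exists_finset_of_isCompact_of_isOpen {W : Set (Spc C)} (hWo : IsOpen W) (hWc : IsCompact W) :
    ∃ F : Finset C, (∀ t ∈ F, (supp C t)ᶜ ⊆ W) ∧ W ⊆ ⋃ t ∈ F, (supp C t)ᶜ := by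
  obtain ⟨F, hFW, hF, hWF⟩ := hWc.elim_finite_subcover_image (b := {t | (supp C t)ᶜ ⊆ W})
    (fun t _ => isOpen_compl_supp t) fun Q hQ =>
      let ⟨t, htQ, ht⟩ := exists_mem_compl_supp_subset hWo hQ
      Set.mem_biUnion ht (mem_compl_supp.2 htQ)
  refine ⟨hF.toFinset, fun t ht => hFW (hF.mem_toFinset.1 ht), ?_⟩
  simpa using hWF

lemma exists_mem_supp_subset_supp {Q : Spc C} (F : Finset C) (hF : ∀ t ∈ F, Q ∈ supp C t) :
    ∃ u : C, Q ∈ supp C u ∧ ∀ t ∈ F, supp C u ⊆ supp C t := by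
  classical
  induction F using Finset.induction_on with
  | empty => exact ⟨𝟙_ C, ThickIdeal.one_not_mem Q.2.1, by simp⟩
  | insert x F _ ih =>
    obtain ⟨u, hQu, hu⟩ := ih fun t ht => hF t (Finset.mem_insert_of_mem ht)
    obtain ⟨c, hc⟩ := (Q.1.isPrime_iff.1 Q.2).2 x u (hF x (Finset.mem_insert_self x F)) hQu
    refine ⟨x ⊗ (c ⊗ u), hc, (Finset.forall_mem_insert _ _ _).2 ⟨supp_tensor_subset_left _ _, ?_⟩⟩
    exact fun t ht => (supp_tensor_subset_right _ _).trans
      ((supp_tensor_subset_right _ _).trans (hu t ht))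

lemma exists_mem_supp_subset {Z : Set (Spc C)} (hZ : IsClosed Z) (hZc : IsCompact Zᶜ) {Q : Spc C}
    (hQ : Q ∈ Z) : ∃ u : C, Q ∈ supp C u ∧ supp C u ⊆ Z := by
  obtain ⟨F, hFZ, hZF⟩ := exists_finset_of_isCompact_of_isOpen hZ.isOpen_compl hZc
  obtain ⟨u, hQu, hu⟩ := exists_mem_supp_subset_supp F fun t ht htQ =>
    hFZ t ht (mem_compl_supp.2 htQ) hQ
  refine ⟨u, hQu, fun P hP => by_contra fun hPZ => ?_⟩
  obtain ⟨t, ht, hPt⟩ := Set.mem_iUnion₂.1 (hZF hPZ)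
  exact hPt (hu t ht hP)

end Spectrum

section Classification

variable {C}

def suppIdeal (Y : Set (Spc C)) : ThickIdeal C where
  carrier := {t : C | supp C t ⊆ Y}
  zero_mem P hP := (hP P.1.zero_mem).elim
  iso_closed e h P hP := h fun ha => hP (P.1.iso_closed e ha)
  shift_mem a n h P hP := h fun ha => hP (P.1.shift_mem a n ha)
  ext₂ T hT h₁ h₃ P hP := by
    by_cases hP₁ : T.obj₁ ∈ P.1.carrier
    · exact h₃ fun hP₃ => hP (P.1.ext₂ T hT hP₁ hP₃)
    · exact h₁ hP₁
  summand_mem a b h P hP := h fun hab => hP (P.1.summand_mem a b hab)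
  tensor_left_mem a x h := (supp_tensor_subset_right x a).trans h
  tensor_right_mem a x h := (supp_tensor_subset_left a x).trans h

lemma suppSet_suppIdeal {Y : Set (Spc C)} (hY : IsThomason C Y) :
    suppSet C (suppIdeal Y).carrier = Y := by
  refine subset_antisymm (Set.iUnion₂_subset fun t ht => ht) fun Q hQ => ?_
  obtain ⟨𝒴, rfl, h𝒴⟩ := hY
  obtain ⟨Z, hZ𝒴, hQZ⟩ := hQ
  obtain ⟨u, hQu, huZ⟩ := exists_mem_supp_subset (h𝒴 Z hZ𝒴).1 (h𝒴 Z hZ𝒴).2 hQZ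
  exact Set.mem_biUnion (huZ.trans (Set.subset_sUnion_of_mem hZ𝒴)) hQu

lemma suppIdeal_suppSet
    (rigid : ∀ X : C, Nonempty (HasLeftDual X) ∨ Nonempty (HasRightDual X)) (J : ThickIdeal C) :
    suppIdeal (suppSet C J.carrier) = J := by
  refine le_antisymm (fun t ht => by_contra fun htJ => ?_) fun t ht => Set.subset_biUnion_of_mem ht
  obtain ⟨P, hP, hJP, htP⟩ := J.exists_isPrime_not_mem rigid htJ
  obtain ⟨j, hj, hjP⟩ := Set.mem_iUnion₂.1 (ht (show ⟨P, hP⟩ ∈ supp C t from htP))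
  exact hjP (hJP hj)

lemma isThomason_suppSet [NoetherianSpace (Spc C)] (E : Set C) : IsThomason C (suppSet C E) :=
  ⟨supp C '' E, (Set.sUnion_image _ _).symm, by
    rintro _ ⟨t, -, rfl⟩
    exact ⟨isClosed_supp t, NoetherianSpace.isCompact _⟩⟩

lemma suppIdeal_le_suppIdeal_iff {Y₁ Y₂ : Set (Spc C)} (h₁ : IsThomason C Y₁)
    (h₂ : IsThomason C Y₂) : suppIdeal Y₁ ≤ suppIdeal Y₂ ↔ Y₁ ⊆ Y₂ := by
  refine ⟨fun h => ?_, fun h t ht => ht.trans h⟩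
  rw [← suppSet_suppIdeal h₁, ← suppSet_suppIdeal h₂]
  exact Set.biUnion_subset_biUnion_left h

end Classification

/-- If `C` is rigid (every object left or right dualisable) and `Spc C` is
noetherian, then `Y ↦ T_Y` is an inclusion-preserving bijection from Thomason
subsets of `Spc C` to ALL thick two-sided tensor ideals of `C`, with inverse
`J ↦ supp J`. -/
theorem statement11 (noeth : NoetherianSpace (Spc C))
    (rigid : ∀ X : C, Nonempty (HasLeftDual X) ∨ Nonempty (HasRightDual X)) :
    ∃ e : {Y : Set (Spc C) // IsThomason C Y} ≃ ThickIdeal C,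
      (∀ Y₁ Y₂ : {Y : Set (Spc C) // IsThomason C Y},
        Y₁.1 ⊆ Y₂.1 ↔ (e Y₁).carrier ⊆ (e Y₂).carrier) ∧
      (∀ Y : {Y : Set (Spc C) // IsThomason C Y},
        (e Y).carrier = {t : C | supp C t ⊆ Y.1}) ∧
      (∀ J : ThickIdeal C, (e.symm J).1 = suppSet C J.carrier) := by
  let e : {Y : Set (Spc C) // IsThomason C Y} ≃ ThickIdeal C :=
    { toFun Y := suppIdeal Y.1
      invFun J := ⟨suppSet C J.carrier, isThomason_suppSet _⟩
      left_inv Y := Subtype.ext (suppSet_suppIdeal Y.2)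
      right_inv := suppIdeal_suppSet rigid }
  exact ⟨e, fun Y₁ Y₂ => (suppIdeal_le_suppIdeal_iff Y₁.2 Y₂.2).symm, fun _ => rfl, fun _ => rfl⟩
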